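/- For every n ≥ 1 with F_{k-1} ≤ n+1 < F_k (k ≥ 2), the initial non-repetitive complexity of the Fibonacci word satisfies inrc_f(n) = F_{k-1}. -/
import Mathlib


/-- The finite Fibonacci words: f₀ = 0, f₁ = 01, f_{k+2} = f_{k+1} f_k. -/
def fibw : ℕ → List ℕ
  | 0 => [0]
  | 1 => [0, 1]
  | (k + 2) => fibw (k + 1) ++ fibw k

/-- The Fibonacci numbers with F₀ = 1, F₁ = 2. -/
def F : ℕ → ℕ
  | 0 => 1
  | 1 => 2
  | (k + 2) => F (k + 1) + F k

/-- The infinite Fibonacci word f = φ^ω(0). -/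
def fibWord (i : ℕ) : ℕ := (fibw (i + 2)).getD i 0

/-- The set of `m` such that the first `m` length-`n` factors of `x`
are pairwise distinct; `inrc x n` is its greatest element. -/
def inrcSet {α : Type*} (x : ℕ → α) (n : ℕ) : Set ℕ :=
  {m | ∀ i < m, ∀ j < m, (∀ d < n, x (i + d) = x (j + d)) → i = j}

lemma F_add (k : ℕ) : F (k+2) = F (k+1) + F k := rfl

lemma F_pos : ∀ k, 1 ≤ F k
  | 0 => le_refl _
  | 1 => by norm_num [F]
  | (k+2) => by rw [F_add]; have := F_pos k; omega

lemma F_ge : ∀ k, k + 1 ≤ F k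
  | 0 => by norm_num [F]
  | 1 => by norm_num [F]
  | (k+2) => by rw [F_add]; have h1 := F_ge (k+1); have h2 := F_pos k; omega

lemma F_lt_succ : ∀ k, F k < F (k+1)
  | 0 => by norm_num [F]
  | (k+1) => by rw [F_add]; have := F_pos k; omega

lemma F_mono {a b : ℕ} (h : a ≤ b) : F a ≤ F b := by
  induction b with
  | zero => rw [Nat.le_zero.mp h]
  | succ b ih =>
    rcases Nat.lt_or_ge a (b+1) with h'|h'
    · exact le_trans (ih (by omega)) (le_of_lt (F_lt_succ b))
    · have : a = b+1 := by omega
      rw [this]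

lemma length_fibw : ∀ k, (fibw k).length = F k
  | 0 => rfl
  | 1 => rfl
  | (k+2) => by
      show (fibw (k+1) ++ fibw k).length = F (k+1) + F k
      rw [List.length_append, length_fibw (k+1), length_fibw k]

lemma fibw_prefix : ∀ k, fibw k <+: fibw (k+1)
  | 0 => ⟨[1], rfl⟩
  | (k+1) => ⟨fibw k, rfl⟩

lemma fibw_prefix_le {a b : ℕ} (h : a ≤ b) : fibw a <+: fibw b := by
  induction b with
  | zero => rw [Nat.le_zero.mp h]
  | succ b ih =>
    rcases Nat.lt_or_ge a (b+1) with h'|h'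
    · exact (ih (by omega)).trans (fibw_prefix b)
    · have : a = b+1 := by omega
      rw [this]

lemma getD_prefix {l l' : List ℕ} (h : l <+: l') {n : ℕ} (hn : n < l.length) :
    l'.getD n 0 = l.getD n 0 := by
  obtain ⟨t, rfl⟩ := h
  exact List.getD_append l t 0 n hn

lemma fibWord_eq_getD (k i : ℕ) (h : i < F k) : fibWord i = (fibw k).getD i 0 := by
  unfold fibWord
  rcases le_total k (i+2) with hle|hle
  · exact getD_prefix (fibw_prefix_le hle) (by rw [length_fibw]; exact h)
  · exact (getD_prefix (fibw_prefix_le hle)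
      (by rw [length_fibw]; exact lt_of_lt_of_le (by omega) (F_ge (i+2)))).symm

lemma fibw_binary : ∀ k, ∀ a ∈ fibw k, a = 0 ∨ a = 1
  | 0 => by intro a ha; simp [fibw] at ha; omega
  | 1 => by intro a ha; simp [fibw] at ha; omega
  | (k+2) => by
      intro a ha
      rcases List.mem_append.mp ha with h|h
      · exact fibw_binary (k+1) a h
      · exact fibw_binary k a h

lemma fibWord_binary (i : ℕ) : fibWord i = 0 ∨ fibWord i = 1 := by
  have h : i < (fibw (i+2)).length := by
    rw [length_fibw]; exact lt_of_lt_of_le (by omega) (F_ge (i+2))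
  have : fibWord i = (fibw (i+2))[i] := List.getD_eq_getElem _ _ h
  rw [this]
  exact fibw_binary (i+2) _ (List.getElem_mem _)

def phil (l : List ℕ) : List ℕ := l.flatMap (fun a => if a = 0 then [0,1] else [0])

lemma phil_nil : phil [] = [] := rfl

lemma phil_cons (a : ℕ) (t : List ℕ) :
    phil (a :: t) = (if a = 0 then [0,1] else [0]) ++ phil t := by
  simp [phil]

lemma phil_append (l l' : List ℕ) : phil (l ++ l') = phil l ++ phil l' := by
  simp [phil]

lemma phil_fibw : ∀ k, phil (fibw k) = fibw (k+1)
  | 0 => rfl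
  | 1 => rfl
  | (k+2) => by
      show phil (fibw (k+1) ++ fibw k) = fibw (k+2) ++ fibw (k+1)
      rw [phil_append, phil_fibw (k+1), phil_fibw k]

lemma phil_getD_zero : ∀ (t : List ℕ), (phil t).getD 0 0 = 0
  | [] => rfl
  | (a :: t) => by
      rw [phil_cons]
      by_cases h : a = 0 <;> simp [h]

lemma LS : ∀ (l : List ℕ) (m : ℕ), m < l.length →
    (phil l).getD (m + (l.take m).count 0) 0 = 0 ∧
    (phil l).getD (m + (l.take m).count 0 + 1) 0 = (if l.getD m 0 = 0 then 1 else 0) := by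
  intro l
  induction l with
  | nil => intro m hm; simp at hm
  | cons a t ih =>
    intro m hm
    cases m with
    | zero =>
      rw [phil_cons]
      by_cases h : a = 0
      · simp [h]
      · refine ⟨by simp [h], ?_⟩
        simp only [h, if_false, List.take_zero, List.count_nil, List.getD_cons_zero]
        simp only [Nat.zero_add]
        rw [show ((([0] : List ℕ) ++ phil t).getD 1 0) = (phil t).getD 0 0 from rfl]
        rw [phil_getD_zero t]
    | succ m =>
      have hm' : m < t.length := by simpa using hm
      obtain ⟨h1, h2⟩ := ih m hm'
      have hcount : ((a :: t).take (m+1)).count 0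
          = (t.take m).count 0 + (if a = 0 then 1 else 0) := by
        rw [List.take_succ_cons, List.count_cons]
        by_cases h : a = 0 <;> simp [h]
      rw [phil_cons]
      by_cases h : a = 0
      · have hidx : (m+1) + ((a :: t).take (m+1)).count 0
            = (m + (t.take m).count 0) + 2 := by rw [hcount]; simp [h]; omega
        rw [hidx]
        simp only [h, if_true]
        refine ⟨?_, ?_⟩
        · rw [show (([0,1] : List ℕ) ++ phil t).getD ((m + (t.take m).count 0) + 2) 0
              = (phil t).getD (m + (t.take m).count 0) 0 from rfl]
          exact h1
        · rw [show (([0,1] : List ℕ) ++ phil t).getD ((m + (t.take m).count 0) + 2 + 1) 0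
              = (phil t).getD (m + (t.take m).count 0 + 1) 0 from rfl]
          rw [List.getD_cons_succ]
          exact h2
      · have hidx : (m+1) + ((a :: t).take (m+1)).count 0
            = (m + (t.take m).count 0) + 1 := by rw [hcount]; simp [h]; omega
        rw [hidx]
        simp only [h, if_false]
        refine ⟨?_, ?_⟩
        · rw [show (([0] : List ℕ) ++ phil t).getD ((m + (t.take m).count 0) + 1) 0
              = (phil t).getD (m + (t.take m).count 0) 0 from rfl]
          exact h1
        · rw [show (([0] : List ℕ) ++ phil t).getD ((m + (t.take m).count 0) + 1 + 1) 0
              = (phil t).getD (m + (t.take m).count 0 + 1) 0 from rfl]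
          rw [List.getD_cons_succ]
          exact h2

def zf : ℕ → ℕ
  | 0 => 0
  | (m+1) => zf m + (if fibWord m = 0 then 1 else 0)

def Sf (m : ℕ) : ℕ := m + zf m

lemma zf_succ (m : ℕ) : zf (m+1) = zf m + (if fibWord m = 0 then 1 else 0) := rfl

lemma Sf_succ (m : ℕ) : Sf (m+1) = Sf m + (if fibWord m = 0 then 2 else 1) := by
  unfold Sf
  rw [zf_succ]
  by_cases h : fibWord m = 0 <;> simp [h] <;> omega

lemma zf_le (m : ℕ) : zf m ≤ m := by
  induction m with
  | zero => exact le_refl _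
  | succ m ih => rw [zf_succ]; by_cases h : fibWord m = 0 <;> simp [h] <;> omega

lemma zf_mono {a b : ℕ} (h : a ≤ b) : zf a ≤ zf b := by
  induction b with
  | zero => rw [Nat.le_zero.mp h]
  | succ b ih =>
    rcases Nat.lt_or_ge a (b+1) with h'|h'
    · refine le_trans (ih (by omega)) ?_
      rw [zf_succ]; omega
    · have : a = b+1 := by omega
      rw [this]

lemma Sf_mono {a b : ℕ} (h : a ≤ b) : Sf a ≤ Sf b := by
  have := zf_mono h; unfold Sf; omega

lemma zf_eq_count (k : ℕ) : ∀ m, m ≤ F k → zf m = ((fibw k).take m).count 0 := by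
  intro m
  induction m with
  | zero => intro _; simp [zf]
  | succ m ih =>
    intro hm
    have hm' : m < (fibw k).length := by rw [length_fibw]; omega
    rw [zf_succ, ih (by omega), List.take_succ, List.count_append]
    have hsome : (fibw k)[m]? = some ((fibw k)[m]) := List.getElem?_eq_getElem hm'
    rw [hsome]
    have hgd : fibWord m = (fibw k)[m] := by
      rw [fibWord_eq_getD k m (by rw [← length_fibw k]; exact hm')]
      exact List.getD_eq_getElem _ _ hm'
    simp only [Option.toList_some]
    rw [List.count_singleton']
    rw [hgd]


lemma fix_aux (m : ℕ) : fibWord (Sf m) = 0 ∧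
    fibWord (Sf m + 1) = (if fibWord m = 0 then 1 else 0) := by
  set k := 2*m + 2 with hk
  have h1 : m < F k := lt_of_lt_of_le (by omega) (F_ge k)
  have hzf : zf m ≤ m := zf_le m
  have hS : Sf m = m + zf m := rfl
  have hlen1 : Sf m < F (k+1) := lt_of_lt_of_le (by omega) (F_ge (k+1))
  have hlen2 : Sf m + 1 < F (k+1) := lt_of_lt_of_le (by omega) (F_ge (k+1))
  have hml : m < (fibw k).length := by rw [length_fibw]; exact h1
  obtain ⟨h2, h3⟩ := LS (fibw k) m hml
  rw [phil_fibw k] at h2 h3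
  have hcount : zf m = ((fibw k).take m).count 0 := zf_eq_count k m (le_of_lt h1)
  have hidx : Sf m = m + ((fibw k).take m).count 0 := by rw [hS, hcount]
  constructor
  · rw [fibWord_eq_getD (k+1) _ hlen1, hidx]
    exact h2
  · rw [fibWord_eq_getD (k+1) _ hlen2, fibWord_eq_getD k m h1, hidx]
    exact h3

lemma count_fibw : ∀ k, (fibw (k+1)).count 0 = F k
  | 0 => by decide
  | 1 => by decide
  | (k+2) => by
      show (fibw (k+2) ++ fibw (k+1)).count 0 = F (k+2)
      rw [List.count_append, count_fibw (k+1), count_fibw k, F_add]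

lemma zf_F (k : ℕ) : zf (F (k+1)) = F k := by
  rw [zf_eq_count (k+1) _ (le_refl _)]
  rw [List.take_of_length_le (by rw [length_fibw])]
  exact count_fibw k

lemma lt2 : ∀ k, (fibw (k+1)).getD (F (k+1) - 2) 0 + (fibw (k+1)).getD (F (k+1) - 1) 0 = 1
  | 0 => by decide
  | 1 => by decide
  | (k+2) => by
      have hF : 2 ≤ F (k+1) := le_trans (by omega) (F_ge (k+1))
      have hlen : (fibw (k+2)).length = F (k+2) := length_fibw _
      have hadd : F (k+3) = F (k+2) + F (k+1) := rfl
      have e1 : F (k+3) - 2 = F (k+2) + (F (k+1) - 2) := by omega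
      have e2 : F (k+3) - 1 = F (k+2) + (F (k+1) - 1) := by omega
      show (fibw (k+2) ++ fibw (k+1)).getD (F (k+3) - 2) 0
          + (fibw (k+2) ++ fibw (k+1)).getD (F (k+3) - 1) 0 = 1
      rw [e1, e2]
      rw [List.getD_append_right _ _ _ _ (by omega), List.getD_append_right _ _ _ _ (by omega)]
      rw [hlen]
      rw [show F (k+2) + (F (k+1) - 2) - F (k+2) = F (k+1) - 2 by omega]
      rw [show F (k+2) + (F (k+1) - 1) - F (k+2) = F (k+1) - 1 by omega]
      exact lt2 k

lemma zf_F_sub2 (k : ℕ) (hk : 1 ≤ k) : zf (F (k+1) - 2) + 1 = F k := by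
  have h3 : 3 ≤ F (k+1) := le_trans (by omega) (F_ge (k+1))
  obtain ⟨x, hx⟩ : ∃ x, F (k+1) = x + 2 := ⟨F (k+1) - 2, by omega⟩
  have hz : zf (F (k+1)) = F k := zf_F k
  rw [hx] at hz ⊢
  rw [show x + 2 - 2 = x by omega]
  rw [show x + 2 = (x+1)+1 by omega, zf_succ, zf_succ] at hz
  have i1 : fibWord x = (fibw (k+1)).getD x 0 := fibWord_eq_getD _ _ (by omega)
  have i2 : fibWord (x+1) = (fibw (k+1)).getD (x+1) 0 := fibWord_eq_getD _ _ (by omega)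
  have hl := lt2 k
  rw [hx, show x + 2 - 2 = x by omega, show x + 2 - 1 = x + 1 by omega, ← i1, ← i2] at hl
  rcases fibWord_binary x with b1|b1 <;> rcases fibWord_binary (x+1) with b2|b2 <;>
    rw [b1, b2] at hl <;> simp [b1, b2] at hz <;> omega

lemma fibWord_zero : fibWord 0 = 0 := rfl

lemma C1 : ∀ p, Sf (zf p) = if fibWord p = 0 then p else p + 1 := by
  intro p
  induction p with
  | zero => simp [fibWord_zero, zf, Sf]
  | succ p ih =>
    obtain ⟨hfix0, hfix1⟩ := fix_aux (zf p)
    rcases fibWord_binary p with h|h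
    · rw [h] at ih; simp at ih
      have hz : zf (p+1) = zf p + 1 := by rw [zf_succ, h]; simp
      have hp1 : fibWord (p+1) = (if fibWord (zf p) = 0 then 1 else 0) := by
        rw [← hfix1, ih]
      rcases fibWord_binary (zf p) with h0|h0
      · rw [h0] at hp1; simp at hp1
        rw [hz, Sf_succ, ih, h0, hp1]; simp
      · rw [h0] at hp1; simp at hp1
        rw [hz, Sf_succ, ih, h0, hp1]; simp
    · rw [h] at ih; simp at ih
      have hz : zf (p+1) = zf p := by rw [zf_succ, h]; simp
      have hp1 : fibWord (p+1) = 0 := ih ▸ hfix0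
      rw [hz, ih, hp1]; simp

lemma C2 (p : ℕ) (h : fibWord p = 1) : 1 ≤ p ∧ fibWord (p - 1) = 0 := by
  have hC := C1 p
  rw [h] at hC; simp at hC
  have hzp : 1 ≤ zf p := by
    by_contra h'
    have h0 : zf p = 0 := by omega
    rw [h0] at hC
    simp [Sf, zf] at hC
  obtain ⟨q, hq⟩ : ∃ q, zf p = q + 1 := ⟨zf p - 1, by omega⟩
  have hs : Sf (q+1) = Sf q + (if fibWord q = 0 then 2 else 1) := Sf_succ q
  obtain ⟨hf0, _⟩ := fix_aux q
  rw [hq, hs] at hC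
  rcases fibWord_binary q with h0|h0
  · rw [h0] at hC; simp at hC
    refine ⟨by omega, ?_⟩
    rw [show p - 1 = Sf q by omega]
    exact hf0
  · rw [h0] at hC; simp at hC
    have hqp : Sf q = p := by omega
    rw [hqp] at hf0
    rw [hf0] at h
    omega

lemma core (k : ℕ) (hk : 1 ≤ k)
    (IH : ∀ i j, i < j → j < F k →
      ∃ e, fibWord (i+e) ≠ fibWord (j+e) ∧ e + 2 ≤ F k ∧ j + e + 2 ≤ F (k+1))
    (i j : ℕ) (hij : i < j) (hjF : j < F (k+1))
    (hi0 : fibWord i = 0) (hj0 : fibWord j = 0) :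
    ∃ d, 1 ≤ d ∧ fibWord (i+d) ≠ fibWord (j+d) ∧ j + d + 2 ≤ F (k+2) := by
  set t := zf i with ht
  set t' := zf j with ht'
  have htt : t < t' := by
    have h1 : zf (i+1) = zf i + 1 := by rw [zf_succ, hi0]; simp
    have h2 := zf_mono (show i+1 ≤ j by omega)
    omega
  have ht'F : t' + 1 ≤ F k := by
    have h1 : zf (j+1) = zf j + 1 := by rw [zf_succ, hj0]; simp
    have h2 := zf_mono (show j + 1 ≤ F (k+1) by omega)
    have h3 : zf (F (k+1)) = F k := zf_F k
    omega
  obtain ⟨eh, hehd, heh2, heh3⟩ := IH t t' htt (by omega)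
  have hex : ∃ e, fibWord (t+e) ≠ fibWord (t'+e) := ⟨eh, hehd⟩
  have he0 : fibWord (t + Nat.find hex) ≠ fibWord (t' + Nat.find hex) := Nat.find_spec hex
  set e0 := Nat.find hex with he0def
  have he0min : ∀ s, s < e0 → fibWord (t+s) = fibWord (t'+s) := by
    intro s hs
    have := Nat.find_min hex hs
    push_neg at this
    exact this
  have he0le : e0 ≤ eh := Nat.find_min' hex hehd
  have hSi : Sf t = i := by have := C1 i; rw [hi0] at this; simpa using this
  have hSj : Sf t' = j := by have := C1 j; rw [hj0] at this; simpa using this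
  have hsync : ∀ s, s ≤ e0 → Sf (t+s) + j = Sf (t'+s) + i := by
    intro s
    induction s with
    | zero => intro _; simp only [Nat.add_zero]; omega
    | succ s ihs =>
      intro hs
      have h1 := ihs (by omega)
      have heq := he0min s (by omega)
      have h2 : Sf (t+s+1) = Sf (t+s) + (if fibWord (t+s) = 0 then 2 else 1) := Sf_succ _
      have h3 : Sf (t'+s+1) = Sf (t'+s) + (if fibWord (t'+s) = 0 then 2 else 1) := Sf_succ _
      rw [show t + (s+1) = t+s+1 by omega, show t' + (s+1) = t'+s+1 by omega, h2, h3]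
      rcases fibWord_binary (t+s) with hb|hb <;>
        · rw [hb] at heq
          rw [hb, ← heq]
          simp
          omega
  have hkey := hsync e0 (le_refl _)
  obtain ⟨hA0, hA1⟩ := fix_aux (t + e0)
  obtain ⟨hB0, hB1⟩ := fix_aux (t' + e0)
  have hiA : i ≤ Sf (t + e0) := by
    have := Sf_mono (Nat.le_add_right t e0); omega
  refine ⟨Sf (t+e0) + 1 - i, by omega, ?_, ?_⟩
  · have e1 : i + (Sf (t+e0) + 1 - i) = Sf (t+e0) + 1 := by omega
    have e2 : j + (Sf (t+e0) + 1 - i) = Sf (t'+e0) + 1 := by omega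
    rw [e1, e2, hA1, hB1]
    rcases fibWord_binary (t+e0) with h|h <;> rcases fibWord_binary (t'+e0) with h'|h'
    · exact absurd (h.trans h'.symm) he0
    · rw [h, h']; simp
    · rw [h, h']; simp
    · exact absurd (h.trans h'.symm) he0
  · have h4 : t' + e0 ≤ F (k+1) - 2 := by omega
    have h5 := Sf_mono h4
    have h6 : zf (F (k+1) - 2) + 1 = F k := zf_F_sub2 k hk
    have h7 : Sf (F (k+1) - 2) = F (k+1) - 2 + zf (F (k+1) - 2) := rfl
    have h8 : 2 ≤ F (k+1) := le_trans (by omega) (F_ge (k+1))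
    have hF2 : F (k+2) = F (k+1) + F k := F_add k
    omega

lemma fibWord_one : fibWord 1 = 1 := rfl
lemma fibWord_two : fibWord 2 = 0 := rfl
lemma fibWord_three : fibWord 3 = 0 := rfl

lemma G : ∀ k, 1 ≤ k → ∀ i j, i < j → j < F k →
    ∃ e, fibWord (i+e) ≠ fibWord (j+e) ∧ e + 2 ≤ F k ∧ j + e + 2 ≤ F (k+1) := by
  intro k
  induction k using Nat.strong_induction_on with
  | _ k IH =>
  intro hk i j hij hj
  rcases Nat.lt_or_ge k 3 with hsmall|hbig
  · have hk12 : k = 1 ∨ k = 2 := by omega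
    rcases hk12 with rfl|rfl
    · have hF1 : F 1 = 2 := rfl
      have hF2 : F (1+1) = 3 := rfl
      have hij' : i = 0 ∧ j = 1 := by omega
      obtain ⟨rfl, rfl⟩ := hij'
      refine ⟨0, ?_, by omega, by omega⟩
      rw [Nat.add_zero, Nat.add_zero, fibWord_zero, fibWord_one]
      omega
    · have hF2 : F 2 = 3 := rfl
      have hF3 : F (2+1) = 5 := rfl
      have hcases : (i = 0 ∧ j = 1) ∨ (i = 0 ∧ j = 2) ∨ (i = 1 ∧ j = 2) := by omega
      rcases hcases with ⟨rfl, rfl⟩|⟨rfl, rfl⟩|⟨rfl, rfl⟩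
      · refine ⟨0, ?_, by omega, by omega⟩
        rw [Nat.add_zero, Nat.add_zero, fibWord_zero, fibWord_one]; omega
      · refine ⟨1, ?_, by omega, by omega⟩
        rw [Nat.zero_add, fibWord_one, fibWord_three]; omega
      · refine ⟨0, ?_, by omega, by omega⟩
        rw [Nat.add_zero, Nat.add_zero, fibWord_one, fibWord_two]; omega
  · obtain ⟨K, rfl⟩ : ∃ K, k = K + 3 := ⟨k - 3, by omega⟩
    have IH' := IH (K+2) (by omega) (by omega)
    have nn1 : F (K+2+1) = F (K+3) := rfl
    have nn2 : F (K+2+2) = F (K+3+1) := rfl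
    have hadd3 : F (K+3) = F (K+2) + F (K+1) := rfl
    have hadd4 : F (K+3+1) = F (K+3) + F (K+2) := rfl
    have hm1 : F (K+2) < F (K+3) := by have := F_pos (K+1); omega
    have hge2 : K + 3 ≤ F (K+2) := F_ge _
    by_cases hcase : j < F (K+2)
    · obtain ⟨e, h1, h2, h3⟩ := IH' i j hij hcase
      exact ⟨e, h1, by omega, by omega⟩
    · push_neg at hcase
      rcases fibWord_binary i with hi|hi <;> rcases fibWord_binary j with hjv|hjv
      · obtain ⟨d, hd1, hd2, hd3⟩ := core (K+2) (by omega) IH' i j hij (by omega) hi hjv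
        exact ⟨d, hd2, by omega, by omega⟩
      · refine ⟨0, ?_, by omega, by omega⟩
        rw [Nat.add_zero, Nat.add_zero, hi, hjv]; omega
      · refine ⟨0, ?_, by omega, by omega⟩
        rw [Nat.add_zero, Nat.add_zero, hi, hjv]; omega
      · obtain ⟨hi1, hi0'⟩ := C2 i hi
        obtain ⟨hj1, hj0'⟩ := C2 j hjv
        by_cases hj' : j - 1 < F (K+2)
        · obtain ⟨e', h1, h2, h3⟩ := IH' (i-1) (j-1) (by omega) hj'
          have hne : e' ≠ 0 := by
            intro h0
            rw [h0, Nat.add_zero, Nat.add_zero, hi0', hj0'] at h1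
            exact h1 rfl
          refine ⟨e' - 1, ?_, by omega, by omega⟩
          rw [show i + (e' - 1) = (i-1) + e' by omega, show j + (e' - 1) = (j-1) + e' by omega]
          exact h1
        · push_neg at hj'
          obtain ⟨d, hd1, hd2, hd3⟩ := core (K+2) (by omega) IH' (i-1) (j-1)
            (by omega) (by omega) hi0' hj0'
          refine ⟨d - 1, ?_, by omega, by omega⟩
          rw [show i + (d - 1) = (i-1) + d by omega, show j + (d - 1) = (j-1) + d by omega]
          exact hd2

lemma swap3 : ∀ K, ∀ d, d + 2 < F (K+2) →
    (fibw K ++ fibw (K+1)).getD d 0 = (fibw (K+1) ++ fibw K).getD d 0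
  | 0 => by
      intro d hd
      have h02 : F (0+2) = 3 := rfl
      have hd0 : d = 0 := by omega
      rw [hd0]
      rfl
  | (K+1) => by
      intro d hd
      have hF3 : F (K+1+2) = F (K+2) + F (K+1) := rfl
      have hlen : (fibw (K+1)).length = F (K+1) := length_fibw _
      have hL : fibw (K+1) ++ fibw (K+1+1) = fibw (K+1) ++ (fibw (K+1) ++ fibw K) := rfl
      have hR : fibw (K+1+1) ++ fibw (K+1) = fibw (K+1) ++ (fibw K ++ fibw (K+1)) := by
        show (fibw (K+1) ++ fibw K) ++ fibw (K+1) = _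
        rw [List.append_assoc]
      rw [hL, hR]
      rcases Nat.lt_or_ge d (F (K+1)) with h|h
      · rw [List.getD_append (fibw (K+1)) (fibw (K+1) ++ fibw K) 0 d (by rw [hlen]; exact h),
            List.getD_append (fibw (K+1)) (fibw K ++ fibw (K+1)) 0 d (by rw [hlen]; exact h)]
      · rw [List.getD_append_right (fibw (K+1)) (fibw (K+1) ++ fibw K) 0 d (by rw [hlen]; exact h),
            List.getD_append_right (fibw (K+1)) (fibw K ++ fibw (K+1)) 0 d (by rw [hlen]; exact h)]
        rw [hlen]
        exact (swap3 K (d - F (K+1)) (by omega)).symm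

lemma per (K : ℕ) (d : ℕ) (hd : d + 2 < F (K+2)) :
    fibWord (F (K+1) + d) = fibWord d := by
  have hlen : (fibw (K+1)).length = F (K+1) := length_fibw _
  have hadd : F (K+3) = F (K+2) + F (K+1) := rfl
  have hadd2 : F (K+2) = F (K+1) + F K := rfl
  have h1 : F (K+1) + d < F (K+3) := by omega
  rw [fibWord_eq_getD (K+3) _ h1, fibWord_eq_getD (K+2) d (by omega)]
  have hsplit : fibw (K+3) = fibw (K+1) ++ (fibw K ++ fibw (K+1)) := by
    show (fibw (K+1) ++ fibw K) ++ fibw (K+1) = _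
    rw [List.append_assoc]
  rw [hsplit]
  rw [List.getD_append_right (fibw (K+1)) (fibw K ++ fibw (K+1)) 0 _ (by rw [hlen]; omega)]
  rw [hlen, show F (K+1) + d - F (K+1) = d by omega]
  rw [swap3 K d (by omega)]
  rfl

/-- if F_{k-1} ≤ n+1 < F_k with k ≥ 2 and n ≥ 1, then
inrc_f(n) = F_{k-1}. -/
theorem inrc_fib (k n : ℕ) (hk : 2 ≤ k) (hn : 1 ≤ n)
    (h1 : F (k - 1) ≤ n + 1) (h2 : n + 1 < F k) :
    IsGreatest (inrcSet fibWord n) (F (k - 1)) := by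
  obtain ⟨K, rfl⟩ : ∃ K, k = K + 2 := ⟨k - 2, by omega⟩
  have hk1 : K + 2 - 1 = K + 1 := rfl
  rw [hk1] at h1 ⊢
  constructor
  · show ∀ i < F (K+1), ∀ j < F (K+1), (∀ d < n, fibWord (i + d) = fibWord (j + d)) → i = j
    intro i hi j hj hw
    rcases lt_trichotomy i j with h|h|h
    · obtain ⟨e, hd, he2, _⟩ := G (K+1) (by omega) i j h hj
      exact absurd (hw e (by omega)) hd
    · exact h
    · obtain ⟨e, hd, he2, _⟩ := G (K+1) (by omega) j i h hi
      exact absurd (hw e (by omega)).symm hd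
  · intro m hm
    simp only [inrcSet, Set.mem_setOf_eq] at hm
    by_contra hgt
    push_neg at hgt
    have hFpos : 1 ≤ F (K+1) := F_pos _
    have hw : ∀ d < n, fibWord (0 + d) = fibWord (F (K+1) + d) := by
      intro d hd
      rw [Nat.zero_add]
      exact (per K d (by omega)).symm
    have := hm 0 (by omega) (F (K+1)) hgt hw
    omega
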